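/- arXiv:2009.06444 — 2 statements merged into one kernel-verified Lean document; each statement's English description precedes it below -/
import Mathlib

section
/- If the potential outcome pair (Y(0), Y(1)) is conditionally independent of the binary treatment W given X, and Z = ΨᵀX satisfies W ⟂ X | Z, then (Y(0), Y(1)) ⟂ W | Z. Consequently E[Y(1) − Y(0)] = E[ E[Y | W=1, Z] − E[Y | W=0, Z] ] where Y = W·Y(1) + (1−W)·Y(0), provided 0 < P(W=1 | Z) < 1 almost surely. -/
open MeasureTheory ProbabilityTheory Matrix

/-
Because `σ(Z) ⊆ σ(X)`, the tower property and `W ⟂ X | Z` show that `P(W ∈ t | X) = P(W ∈ t | Z)`;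
feeding this into unconfoundedness `P(Y ∈ s, W ∈ t | X) = P(Y ∈ s | X) P(W ∈ t | X)` and
conditioning down to `Z` gives `(Y(0), Y(1)) ⟂ W | Z`. Given `Z`, the bounded weight `W` then
factors out: `E[W Y | Z] = E[W Y(1) | Z] = e(Z) E[Y(1) | Z]`, and likewise
`E[(1 - W) Y | Z] = (1 - e(Z)) E[Y(0) | Z]`. Dividing by the propensity score (overlap) and
integrating gives the identification formula.
-/

namespace ProbabilityTheory

variable {Ω : Type*} {m mΩ : MeasurableSpace Ω} {μ : Measure Ω}

lemma ae_abs_condExp_indicator_le_one (s : Set Ω) :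
    ∀ᵐ ω ∂μ, |(μ⟦s | m⟧) ω| ≤ 1 :=
  ae_bdd_abs_condExp_of_ae_bdd_abs (.of_forall fun ω => by
    by_cases hω : ω ∈ s <;> simp [hω])

variable [IsFiniteMeasure μ]

lemma condExp_one_sub_ae_eq (hm : m ≤ mΩ) {g : Ω → ℝ} (hg : Integrable g μ) :
    μ[fun ω => 1 - g ω | m] =ᵐ[μ] fun ω => 1 - μ[g | m] ω := by
  filter_upwards [condExp_sub (m := m) (integrable_const (1 : ℝ)) hg] with ω hω
  rw [← Pi.sub_def, hω, Pi.sub_apply, condExp_const hm]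

lemma integral_mul_condExp_indicator (hm : m ≤ mΩ) {φ : Ω → ℝ} (hφ : StronglyMeasurable[m] φ)
    {c : ℝ} (hφc : ∀ᵐ ω ∂μ, ‖φ ω‖ ≤ c) {s : Set Ω} (hs : MeasurableSet s) :
    ∫ ω, φ ω * (μ⟦s | m⟧) ω ∂μ = ∫ ω in s, φ ω ∂μ := by
  have hint : Integrable (s.indicator fun _ => (1 : ℝ)) μ := (integrable_const 1).indicator hs
  calc ∫ ω, φ ω * (μ⟦s | m⟧) ω ∂μ = ∫ ω, μ[φ * s.indicator fun _ => (1 : ℝ) | m] ω ∂μ :=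
        integral_congr_ae (condExp_stronglyMeasurable_mul_of_bound hm hφ hint c hφc).symm
    _ = ∫ ω, s.indicator φ ω ∂μ := by
        rw [integral_condExp hm]
        congr 1; ext ω; by_cases hω : ω ∈ s <;> simp [hω]
    _ = ∫ ω in s, φ ω ∂μ := integral_indicator hs

variable [StandardBorelSpace Ω]

lemma condExp_indicator_preimage_comap_ae_eq {β γ : Type*} [MeasurableSpace β]
    [mγ : MeasurableSpace γ] (hm : m ≤ mΩ) {g : Ω → β} {X : Ω → γ} (hg : Measurable g)
    (hX : Measurable X) (hmX : m ≤ mγ.comap X) (hgX : CondIndepFun m hm g X μ) {t : Set β}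
    (ht : MeasurableSet t) :
    μ⟦g ⁻¹' t | mγ.comap X⟧ =ᵐ[μ] μ⟦g ⁻¹' t | m⟧ := by
  have hgt : MeasurableSet (g ⁻¹' t) := hg ht
  refine (ae_eq_condExp_of_forall_setIntegral_eq hX.comap_le
    ((integrable_const 1).indicator hgt) (fun _ _ _ => integrable_condExp.integrableOn) ?_
    (stronglyMeasurable_condExp.mono hmX).aestronglyMeasurable).symm
  rintro _ ⟨s, hs, rfl⟩ -
  have hXs : MeasurableSet (X ⁻¹' s) := hX hs
  calc ∫ ω in X ⁻¹' s, (μ⟦g ⁻¹' t | m⟧) ω ∂μ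
      = ∫ ω, (μ⟦g ⁻¹' t | m⟧) ω * (μ⟦X ⁻¹' s | m⟧) ω ∂μ :=
        (integral_mul_condExp_indicator hm stronglyMeasurable_condExp
          (by simpa using ae_abs_condExp_indicator_le_one _) hXs).symm
    _ = ∫ ω, (μ⟦g ⁻¹' t ∩ X ⁻¹' s | m⟧) ω ∂μ :=
        integral_congr_ae
          ((condIndepFun_iff_condExp_inter_preimage_eq_mul hg hX).1 hgX t s ht hs).symm
    _ = ∫ ω in X ⁻¹' s, (g ⁻¹' t).indicator (fun _ => (1 : ℝ)) ω ∂μ := by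
        rw [integral_condExp hm, integral_indicator (hgt.inter hXs),
          setIntegral_indicator hgt, Set.inter_comm]

/-- The contraction property of conditional independence. -/
theorem CondIndepFun.of_condIndepFun_comap {β β' γ : Type*} [MeasurableSpace β]
    [MeasurableSpace β'] [mγ : MeasurableSpace γ] (hm : m ≤ mΩ) {f : Ω → β} {g : Ω → β'}
    {X : Ω → γ} (hf : Measurable f) (hg : Measurable g) (hX : Measurable X)
    (hmX : m ≤ mγ.comap X) (hfg : CondIndepFun (mγ.comap X) hX.comap_le f g μ)
    (hgX : CondIndepFun m hm g X μ) : CondIndepFun m hm f g μ := by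
  rw [condIndepFun_iff_condExp_inter_preimage_eq_mul hf hg]
  intro s t hs ht
  have hfg' := (condIndepFun_iff_condExp_inter_preimage_eq_mul hf hg).1 hfg s t hs ht
  calc μ⟦f ⁻¹' s ∩ g ⁻¹' t | m⟧
      =ᵐ[μ] μ[μ⟦f ⁻¹' s ∩ g ⁻¹' t | mγ.comap X⟧ | m] :=
        (condExp_condExp_of_le hmX hX.comap_le).symm
    _ =ᵐ[μ] μ[μ⟦g ⁻¹' t | m⟧ * μ⟦f ⁻¹' s | mγ.comap X⟧ | m] := by
        refine condExp_congr_ae ?_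
        filter_upwards [hfg', condExp_indicator_preimage_comap_ae_eq hm hg hX hmX hgX ht]
          with ω h₁ h₂
        rw [h₁, Pi.mul_apply, h₂, mul_comm]
    _ =ᵐ[μ] μ⟦g ⁻¹' t | m⟧ * μ[μ⟦f ⁻¹' s | mγ.comap X⟧ | m] :=
        condExp_stronglyMeasurable_mul_of_bound hm stronglyMeasurable_condExp integrable_condExp 1
          (by simpa using ae_abs_condExp_indicator_le_one _)
    _ =ᵐ[μ] μ⟦g ⁻¹' t | m⟧ * μ⟦f ⁻¹' s | m⟧ :=
        (condExp_condExp_of_le hmX hX.comap_le).mul_left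
    _ = μ⟦f ⁻¹' s | m⟧ * μ⟦g ⁻¹' t | m⟧ := mul_comm _ _

theorem CondIndepFun.condExp_mul_ae_eq (hm : m ≤ mΩ) {f g : Ω → ℝ}
    (h : CondIndepFun m hm f g μ) (hf : Measurable f) (hg : Measurable g)
    (hfi : Integrable f μ) (hgi : Integrable g μ) (hfgi : Integrable (f * g) μ) :
    μ[f * g | m] =ᵐ[μ] μ[f | m] * μ[g | m] := by
  -- `f ⟂ g` under the regular conditional probability `condExpKernel μ m ω` for a.e. `ω`
  have hκ : ∀ᵐ ω ∂μ, IndepFun f g (condExpKernel μ m ω) := by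
    refine ae_of_ae_trim hm ?_
    filter_upwards [(condIndepFun_iff_map_prod_eq_prod_map_map hf hg).1 h] with ω hω
    rw [indepFun_iff_map_prod_eq_prod_map_map hf.aemeasurable hg.aemeasurable]
    simpa [Kernel.map_apply _ (hf.prodMk hg), Kernel.map_apply _ hf, Kernel.map_apply _ hg,
      Kernel.prod_apply] using hω
  filter_upwards [condExp_ae_eq_integral_condExpKernel hm hfgi,
    condExp_ae_eq_integral_condExpKernel hm hfi, condExp_ae_eq_integral_condExpKernel hm hgi, hκ]
    with ω hfg hf' hg' hindep
  rw [hfg, Pi.mul_apply, hf', hg']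
  exact hindep.integral_mul_eq_mul_integral hf.aestronglyMeasurable hg.aestronglyMeasurable

theorem CondIndepFun.condExp_mul_div_condExp_ae_eq (hm : m ≤ mΩ) {f g : Ω → ℝ}
    (h : CondIndepFun m hm f g μ) (hf : Measurable f) (hg : Measurable g) (hfi : Integrable f μ)
    {c : ℝ} (hgc : ∀ᵐ ω ∂μ, ‖g ω‖ ≤ c) (hne : ∀ᵐ ω ∂μ, μ[g | m] ω ≠ 0) :
    (fun ω => μ[g * f | m] ω / μ[g | m] ω) =ᵐ[μ] μ[f | m] := by
  have hgi : Integrable g μ := .of_bound hg.aestronglyMeasurable c hgc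
  filter_upwards [h.symm.condExp_mul_ae_eq hm hg hf hgi hfi
    (hfi.bdd_mul hg.aestronglyMeasurable hgc), hne] with ω hω hω₀
  rw [hω, Pi.mul_apply, mul_div_cancel_left₀ _ hω₀]

end ProbabilityTheory

theorem deconfounding_by_sdr_general
    {Ω : Type*} [mΩ : MeasurableSpace Ω] [StandardBorelSpace Ω]
    (μ : Measure Ω) [IsProbabilityMeasure μ] {p r : ℕ}
    (W : Ω → ℝ) (Y0 Y1 : Ω → ℝ) (X : Ω → (Fin p → ℝ))
    (hW : Measurable W) (hY0 : Measurable Y0) (hY1 : Measurable Y1) (hX : Measurable X)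
    (hW01 : ∀ ω, W ω = 0 ∨ W ω = 1)
    (Ψ : Matrix (Fin p) (Fin r) ℝ)
    (Z : Ω → (Fin r → ℝ)) (hZdef : ∀ ω, Z ω = Ψᵀ.mulVec (X ω))
    (mX : MeasurableSpace Ω) (hmX : mX = MeasurableSpace.comap X inferInstance)
    (mZ : MeasurableSpace Ω) (hmZ : mZ = MeasurableSpace.comap Z inferInstance)
    (hmXle : mX ≤ mΩ) (hmZle : mZ ≤ mΩ)
    -- unconfoundedness: (Y(0),Y(1)) ⟂ W | X
    (hUnconf : CondIndepFun mX hmXle (fun ω => (Y0 ω, Y1 ω)) W μ)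
    -- SDR: W ⟂ X | Z
    (hSDR : CondIndepFun mZ hmZle W X μ)
    -- observed outcome
    (Y : Ω → ℝ) (hYdef : ∀ ω, Y ω = W ω * Y1 ω + (1 - W ω) * Y0 ω)
    -- propensity score e(Z) = P(W=1|Z) = E[W|Z]
    (e : Ω → ℝ) (he : e = μ[W | mZ])
    -- overlap
    (hOverlap : ∀ᵐ ω ∂μ, 0 < e ω ∧ e ω < 1)
    -- all expectations finite
    (hY0int : Integrable Y0 μ) (hY1int : Integrable Y1 μ) :
    CondIndepFun mZ hmZle (fun ω => (Y0 ω, Y1 ω)) W μ ∧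
    ∫ ω, (Y1 ω - Y0 ω) ∂μ =
      ∫ ω, ((μ[fun ω' => W ω' * Y ω' | mZ]) ω / e ω
            - (μ[fun ω' => (1 - W ω') * Y ω' | mZ]) ω / (1 - e ω)) ∂μ := by
  subst hmX he
  have hZX : mZ ≤ MeasurableSpace.comap X inferInstance := by
    rw [hmZ, show Z = (Ψᵀ *ᵥ ·) ∘ X from funext hZdef]
    exact ((continuous_const.matrix_mulVec continuous_id).measurable.comp
      (comap_measurable X)).comap_le
  have hCI := hUnconf.of_condIndepFun_comap hmZle (hY0.prodMk hY1) hW hX hZX hSDR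
  refine ⟨hCI, ?_⟩
  have hWb (ω : Ω) : ‖W ω‖ ≤ 1 ∧ ‖1 - W ω‖ ≤ 1 := by rcases hW01 ω with h | h <;> simp [h]
  have hWY1 : (fun ω => W ω * Y ω) = W * Y1 := by
    ext ω; rcases hW01 ω with h | h <;> simp [hYdef, h]
  have hWY0 : (fun ω => (1 - W ω) * Y ω) = (fun ω => 1 - W ω) * Y0 := by
    ext ω; rcases hW01 ω with h | h <;> simp [hYdef, h]
  have hcompl := condExp_one_sub_ae_eq hmZle
    (.of_bound hW.aestronglyMeasurable 1 (.of_forall fun ω => (hWb ω).1) : Integrable W μ)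
  have hCI1 : CondIndepFun mZ hmZle Y1 W μ := hCI.comp measurable_snd measurable_id
  have hCI0 : CondIndepFun mZ hmZle Y0 (fun ω => 1 - W ω) μ :=
    hCI.comp measurable_fst (measurable_const.sub measurable_id)
  have ipw1 := hCI1.condExp_mul_div_condExp_ae_eq hmZle hY1 hW hY1int
    (.of_forall fun ω => (hWb ω).1) (hOverlap.mono fun ω h => h.1.ne')
  have ipw0 := hCI0.condExp_mul_div_condExp_ae_eq hmZle hY0 (measurable_const.sub hW) hY0int
    (.of_forall fun ω => (hWb ω).2)
    (by filter_upwards [hcompl, hOverlap] with ω hω h; rw [hω]; linarith [h.2])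
  calc ∫ ω, (Y1 ω - Y0 ω) ∂μ = ∫ ω, (μ[Y1 | mZ] ω - μ[Y0 | mZ] ω) ∂μ := by
        rw [integral_sub hY1int hY0int, integral_sub integrable_condExp integrable_condExp,
          integral_condExp hmZle, integral_condExp hmZle]
    _ = _ := by
        refine integral_congr_ae ?_
        filter_upwards [ipw1, ipw0, hcompl] with ω h1 h0 hc
        rw [hWY1, hWY0, ← hc, h1, h0]

/-- If `(Y(0),Y(1)) ⟂ W | X` (unconfoundedness) and `Z = ΨᵀX` satisfies `W ⟂ X | Z`,
then `(Y(0),Y(1)) ⟂ W | Z`; consequently, under overlap,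
`E[Y(1) − Y(0)] = E[ E[Y|W=1,Z] − E[Y|W=0,Z] ]`, where
`E[Y|W=1,Z] = E[W·Y|Z]/e(Z)` and `E[Y|W=0,Z] = E[(1−W)·Y|Z]/(1−e(Z))`
with `e(Z) = P(W=1|Z) = E[W|Z]`. -/
theorem deconfounding_by_sdr
    {Ω : Type*} [mΩ : MeasurableSpace Ω] [StandardBorelSpace Ω] [Nonempty Ω]
    (μ : Measure Ω) [IsProbabilityMeasure μ] {p r : ℕ}
    (W : Ω → ℝ) (Y0 Y1 : Ω → ℝ) (X : Ω → (Fin p → ℝ))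
    (hW : Measurable W) (hY0 : Measurable Y0) (hY1 : Measurable Y1) (hX : Measurable X)
    (hW01 : ∀ ω, W ω = 0 ∨ W ω = 1)
    (Ψ : Matrix (Fin p) (Fin r) ℝ)
    (Z : Ω → (Fin r → ℝ)) (hZdef : ∀ ω, Z ω = Ψᵀ.mulVec (X ω)) (hZ : Measurable Z)
    (mX : MeasurableSpace Ω) (hmX : mX = MeasurableSpace.comap X inferInstance)
    (mZ : MeasurableSpace Ω) (hmZ : mZ = MeasurableSpace.comap Z inferInstance)
    (hmXle : mX ≤ mΩ) (hmZle : mZ ≤ mΩ)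
    -- unconfoundedness: (Y(0),Y(1)) ⟂ W | X
    (hUnconf : CondIndepFun mX hmXle (fun ω => (Y0 ω, Y1 ω)) W μ)
    -- SDR: W ⟂ X | Z
    (hSDR : CondIndepFun mZ hmZle W X μ)
    -- observed outcome
    (Y : Ω → ℝ) (hYdef : ∀ ω, Y ω = W ω * Y1 ω + (1 - W ω) * Y0 ω)
    -- propensity score e(Z) = P(W=1|Z) = E[W|Z]
    (e : Ω → ℝ) (he : e = μ[W | mZ])
    -- overlap
    (hOverlap : ∀ᵐ ω ∂μ, 0 < e ω ∧ e ω < 1)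
    -- all expectations finite
    (hY0int : Integrable Y0 μ) (hY1int : Integrable Y1 μ)
    (hg1int : Integrable (fun ω => (μ[fun ω' => W ω' * Y ω' | mZ]) ω / e ω) μ)
    (hg0int : Integrable (fun ω => (μ[fun ω' => (1 - W ω') * Y ω' | mZ]) ω / (1 - e ω)) μ) :
    CondIndepFun mZ hmZle (fun ω => (Y0 ω, Y1 ω)) W μ ∧
    ∫ ω, (Y1 ω - Y0 ω) ∂μ =
      ∫ ω, ((μ[fun ω' => W ω' * Y ω' | mZ]) ω / e ω
            - (μ[fun ω' => (1 - W ω') * Y ω' | mZ]) ω / (1 - e ω)) ∂μ :=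
  deconfounding_by_sdr_general (mΩ := mΩ) μ W Y0 Y1 X hW hY0 hY1 hX hW01 Ψ Z hZdef mX hmX mZ hmZ
    hmXle hmZle hUnconf hSDR Y hYdef e he hOverlap hY0int hY1int
end

section
/- If Z = f(X) with f measurable, W square-integrable, and E[Var(W|Z)] = E[Var(W|X)], then E[W | X] = E[W | Z] almost surely. -/
/-! Refining the conditioning σ-algebra from `m₁` to `m₂ ⊇ m₁` splits the residual
`W - E[W|m₁]` into `W - E[W|m₂]` and `E[W|m₂] - E[W|m₁]`. The second piece is
`m₂`-measurable, and the first is orthogonal in `L²` to every `m₂`-measurable function,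
so the expected conditional variance drops by exactly `E[(E[W|m₂] - E[W|m₁])²]`.
Equal expected conditional variances force this gap to vanish. -/

open MeasureTheory ProbabilityTheory

/-- Expected conditional variance `E[Var(W|m)] = E[(W − E[W|m])²]`. -/
noncomputable def expCondVar {Ω : Type*} [MeasurableSpace Ω]
    (μ : Measure Ω) (m : MeasurableSpace Ω) (W : Ω → ℝ) : ℝ :=
  ∫ ω, (W ω - (μ[W | m]) ω) ^ 2 ∂μ

namespace MeasureTheory

variable {Ω : Type*} {m m₁ m₂ m₀ : MeasurableSpace Ω} {μ : Measure[m₀] Ω} [IsFiniteMeasure μ]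
  {W : Ω → ℝ}

lemma condExp_sub_condExp_ae_eq_zero (hm : m ≤ m₀) (hW : Integrable W μ) :
    μ[W - μ[W | m] | m] =ᵐ[μ] 0 := by
  have hidem : μ[μ[W | m] | m] = μ[W | m] :=
    condExp_of_stronglyMeasurable hm stronglyMeasurable_condExp integrable_condExp
  filter_upwards [condExp_sub hW (integrable_condExp (m := m) (f := W)) m] with ω hω
  simp [hω, hidem]

lemma integral_mul_sub_condExp_eq_zero (hm : m ≤ m₀) {g : Ω → ℝ}
    (hg : StronglyMeasurable[m] g) (hg₂ : MemLp g 2 μ) (hW : MemLp W 2 μ) :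
    ∫ ω, g ω * (W ω - μ[W | m] ω) ∂μ = 0 := by
  have hres : MemLp (W - μ[W | m]) 2 μ := hW.sub (hW.condExp one_le_two)
  calc ∫ ω, g ω * (W ω - μ[W | m] ω) ∂μ
      = ∫ ω, μ[g * (W - μ[W | m]) | m] ω ∂μ := (integral_condExp hm).symm
    _ = ∫ ω, g ω * μ[W - μ[W | m] | m] ω ∂μ :=
      integral_congr_ae <| condExp_mul_of_stronglyMeasurable_left hg
        (hg₂.integrable_mul hres) (hres.integrable one_le_two)
    _ = ∫ _, (0 : ℝ) ∂μ := by
      refine integral_congr_ae ?_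
      filter_upwards [condExp_sub_condExp_ae_eq_zero hm (hW.integrable one_le_two)] with ω hω
      simp [hω]
    _ = 0 := integral_zero _ _

lemma expCondVar_eq_add_integral_sq_sub_condExp (hm₁₂ : m₁ ≤ m₂) (hm₂ : m₂ ≤ m₀)
    (hW : MemLp W 2 μ) :
    @expCondVar Ω m₀ μ m₁ W =
      @expCondVar Ω m₀ μ m₂ W + ∫ ω, (μ[W | m₂] ω - μ[W | m₁] ω) ^ 2 ∂μ := by
  have hW₁ : MemLp μ[W | m₁] 2 μ := hW.condExp one_le_two
  have hW₂ : MemLp μ[W | m₂] 2 μ := hW.condExp one_le_two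
  have hA : MemLp (W - μ[W | m₂]) 2 μ := hW.sub hW₂
  have hB : MemLp (μ[W | m₂] - μ[W | m₁]) 2 μ := hW₂.sub hW₁
  have hBm : StronglyMeasurable[m₂] (μ[W | m₂] - μ[W | m₁]) :=
    stronglyMeasurable_condExp.sub (stronglyMeasurable_condExp.mono hm₁₂)
  have horth : ∫ ω, (μ[W | m₂] ω - μ[W | m₁] ω) * (W ω - μ[W | m₂] ω) ∂μ = 0 :=
    integral_mul_sub_condExp_eq_zero hm₂ hBm hB hW
  unfold expCondVar
  calc ∫ ω, (W ω - μ[W | m₁] ω) ^ 2 ∂μ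
      = ∫ ω, ((W ω - μ[W | m₂] ω) ^ 2 + (μ[W | m₂] ω - μ[W | m₁] ω) ^ 2
          + 2 * ((μ[W | m₂] ω - μ[W | m₁] ω) * (W ω - μ[W | m₂] ω))) ∂μ :=
        integral_congr_ae <| .of_forall fun ω => by ring
    _ = ∫ ω, (W ω - μ[W | m₂] ω) ^ 2 ∂μ + ∫ ω, (μ[W | m₂] ω - μ[W | m₁] ω) ^ 2 ∂μ
          + 2 * ∫ ω, (μ[W | m₂] ω - μ[W | m₁] ω) * (W ω - μ[W | m₂] ω) ∂μ := by
        rw [integral_add, integral_add, integral_const_mul]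
        exacts [hA.integrable_sq, hB.integrable_sq, hA.integrable_sq.add hB.integrable_sq,
          (hB.integrable_mul hA).const_mul 2]
    _ = _ := by rw [horth, mul_zero, add_zero]

lemma condExp_ae_eq_of_expCondVar_eq (hm₁₂ : m₁ ≤ m₂) (hm₂ : m₂ ≤ m₀) (hW : MemLp W 2 μ)
    (h : @expCondVar Ω m₀ μ m₁ W = @expCondVar Ω m₀ μ m₂ W) :
    μ[W | m₂] =ᵐ[μ] μ[W | m₁] := by
  have hgap : ∫ ω, (μ[W | m₂] ω - μ[W | m₁] ω) ^ 2 ∂μ = 0 := by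
    linarith [expCondVar_eq_add_integral_sq_sub_condExp hm₁₂ hm₂ hW]
  have hsq := (integral_eq_zero_iff_of_nonneg (fun ω => sq_nonneg _)
    ((hW.condExp one_le_two).sub (hW.condExp one_le_two)).integrable_sq).mp hgap
  filter_upwards [hsq] with ω hω
  exact sub_eq_zero.mp (pow_eq_zero_iff two_ne_zero |>.mp hω)

end MeasureTheory

/-- Equality case: if `Z = f(X)` with `f` measurable, `W` square-integrable and
`E[Var(W|Z)] = E[Var(W|X)]`, then `E[W|X] = E[W|Z]` a.s. -/
theorem expCondVar_eq_implies_condexp_eq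
    {Ω : Type*} [mΩ : MeasurableSpace Ω] (μ : Measure Ω) [IsProbabilityMeasure μ]
    {p r : ℕ} (W : Ω → ℝ) (X : Ω → (Fin p → ℝ)) (f : (Fin p → ℝ) → (Fin r → ℝ))
    (hW : MemLp W 2 μ) (hX : Measurable X) (hf : Measurable f)
    (Z : Ω → (Fin r → ℝ)) (hZdef : Z = f ∘ X)
    (mX : MeasurableSpace Ω) (hmX : mX = MeasurableSpace.comap X inferInstance)
    (mZ : MeasurableSpace Ω) (hmZ : mZ = MeasurableSpace.comap Z inferInstance)
    (heq : @expCondVar Ω mΩ μ mZ W = @expCondVar Ω mΩ μ mX W) :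
    μ[W | mX] =ᵐ[μ] μ[W | mZ] := by
  have hmZX : mZ ≤ mX := by
    rw [hmZ, hmX, hZdef, ← MeasurableSpace.comap_comp]
    exact MeasurableSpace.comap_mono hf.comap_le
  have hmXΩ : mX ≤ mΩ := hmX ▸ hX.comap_le
  exact condExp_ae_eq_of_expCondVar_eq hmZX hmXΩ hW heq
end
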